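/- arXiv:2104.08788 — 4 statements merged into one kernel-verified Lean document; each statement's English description precedes it below -/
import Mathlib

section
/- A finite group G is σ-nilpotent if and only if G is the internal direct product H_1 × ⋯ × H_t, where {H_1, …, H_t} is a complete Hall σ-set of G (i.e., each H_j is a Hall σ_{i_j}-subgroup for some σ_{i_j} ∈ σ(G), with exactly one Hall σ_i-subgroup for each σ_i ∈ σ(G)). -/
open Pointwise

/-- `σ` is a partition of the set of all primes. -/
def IsPrimePartition {ι : Type*} (σ : ι → Set ℕ) : Prop :=
  (∀ i, ∀ p ∈ σ i, p.Prime) ∧ (∀ p : ℕ, p.Prime → ∃! i, p ∈ σ i)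

/-- every prime dividing `n` lies in `σ i`. -/
def PrimaryIn {ι : Type*} (σ : ι → Set ℕ) (i : ι) (n : ℕ) : Prop :=
  ∀ p : ℕ, p.Prime → p ∣ n → p ∈ σ i

/-- `σ i ∈ σ(G)` : some prime of `σ i` divides `|G|`. -/
def MemSigma {ι : Type*} (σ : ι → Set ℕ) (i : ι) (G : Type*) [Group G] : Prop :=
  ∃ p : ℕ, p.Prime ∧ p ∈ σ i ∧ p ∣ Nat.card G

/-- the centralizer of the factor `H/K` in `G` (as a set). -/
def chiefCentralizer {G : Type*} [Group G] (H K : Subgroup G) : Set G :=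
  {g : G | ∀ h ∈ H, g * h * g⁻¹ * h⁻¹ ∈ K}

/-- `H/K` is a chief factor of `G`. -/
def IsChiefFactor {G : Type*} [Group G] (H K : Subgroup G) : Prop :=
  H.Normal ∧ K.Normal ∧ K < H ∧
    ∀ L : Subgroup G, L.Normal → K ≤ L → L ≤ H → L = K ∨ L = H

/-- `H/K` is σ-central in `G` : `(H/K) ⋊ (G/C_G(H/K))` is σ-primary,
i.e. every prime dividing `|H/K| · |G/C_G(H/K)|` lies in one block of σ. -/
def SigmaCentral {ι : Type*} (σ : ι → Set ℕ) {G : Type*} [Group G]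
    (H K : Subgroup G) : Prop :=
  ∃ i, PrimaryIn σ i ((Nat.card H / Nat.card K) * (Nat.card G / Nat.card (chiefCentralizer H K)))

/-- `G` is σ-nilpotent: every chief factor is σ-central. -/
def SigmaNilpotent {ι : Type*} (σ : ι → Set ℕ) (G : Type*) [Group G] : Prop :=
  ∀ H K : Subgroup G, IsChiefFactor H K → SigmaCentral σ H K

/-- `G` is σ-soluble: every chief factor is σ-primary. -/
def SigmaSoluble {ι : Type*} (σ : ι → Set ℕ) (G : Type*) [Group G] : Prop :=
  ∀ H K : Subgroup G, IsChiefFactor H K → ∃ i, PrimaryIn σ i (Nat.card H / Nat.card K)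

/-- `H` is a Hall π-subgroup of `G`. -/
def IsHall {G : Type*} [Group G] (π : Set ℕ) (H : Subgroup G) : Prop :=
  (∀ p : ℕ, p.Prime → p ∣ Nat.card H → p ∈ π) ∧
  (∀ p : ℕ, p.Prime → p ∣ H.index → p ∉ π)

/-- `H` is a π-subgroup of `G`. -/
def IsPiSubgroup {G : Type*} [Group G] (π : Set ℕ) (H : Subgroup G) : Prop :=
  ∀ p : ℕ, p.Prime → p ∣ Nat.card H → p ∈ π

/-- `K` is a Hall π-subgroup of the subgroup `A` of `G`. -/
def IsHallIn {G : Type*} [Group G] (π : Set ℕ) (K A : Subgroup G) : Prop :=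
  K ≤ A ∧ (∀ p : ℕ, p.Prime → p ∣ Nat.card K → p ∈ π) ∧
    (∀ p : ℕ, p.Prime → p ∣ K.relIndex A → p ∉ π)

/-- `G` satisfies `D_π`. -/
def SatisfiesD (π : Set ℕ) (G : Type*) [Group G] : Prop :=
  (∃ H : Subgroup G, IsHall π H) ∧
  (∀ H K : Subgroup G, IsHall π H → IsHall π K →
      ∃ g : G, K = Subgroup.map (MulAut.conj g).toMonoidHom H) ∧
  (∀ S : Subgroup G, IsPiSubgroup π S →
      ∃ H : Subgroup G, IsHall π H ∧ S ≤ H)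

/-- `N` is a minimal normal subgroup of `G`. -/
def IsMinimalNormal {G : Type*} [Group G] (N : Subgroup G) : Prop :=
  N.Normal ∧ N ≠ ⊥ ∧ ∀ L : Subgroup G, L.Normal → L ≤ N → L = ⊥ ∨ L = N

/-- the σ-Fitting subgroup: product of all normal σ-nilpotent subgroups. -/
def sigmaFitting {ι : Type*} (σ : ι → Set ℕ) (G : Type*) [Group G] : Subgroup G :=
  ⨆ H ∈ {H : Subgroup G | H.Normal ∧ SigmaNilpotent σ H}, H

/-- `O_π(G)`: the largest normal π-subgroup, i.e. product of all normal π-subgroups. -/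
def Opi (π : Set ℕ) (G : Type*) [Group G] : Subgroup G :=
  ⨆ H ∈ {H : Subgroup G | H.Normal ∧ IsPiSubgroup π H}, H

/-
For a chief factor `H/K`, σ-centrality says that `|H/K|` and `|G : C_G(H/K)|` are `σ i`-numbers
for one and the same `i`. If `G` has a normal Hall `σ i`-subgroup for every `σ i ∈ σ(G)`, a chief
factor is covered by the one whose block contains a prime divisor of `|H/K|`, and every other one
meets `H` inside `K`, hence centralizes `H/K`; so every chief factor is σ-central. Conversely, the
normal Hall subgroups of a σ-nilpotent group are built by induction on `|G|` from a minimal normal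
subgroup `N`, a `σ j`-group with `G/C_G(N)` a `σ j`-group: the preimage of a normal Hall
`σ i`-subgroup of `G/N` is already Hall when `i = j`, and otherwise contains a Schur–Zassenhaus
complement to `N`, which has order prime to `|G : C_G(N)|`, so it centralizes `N` and is normal.
Normal Hall subgroups for distinct blocks intersect trivially, so they commute, and together they
generate `G`.
-/

section Partition

variable {ι : Type*} {σ : ι → Set ℕ}

theorem IsPrimePartition.disjoint (hσ : IsPrimePartition σ) {i j : ι} (hij : i ≠ j) :
    Disjoint (σ i) (σ j) :=
  Set.disjoint_left.mpr fun p hpi hpj =>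
    hij ((hσ.2 p (hσ.1 i p hpi)).unique hpi hpj)

theorem primaryIn_mul_iff {i : ι} {a b : ℕ} :
    PrimaryIn σ i (a * b) ↔ PrimaryIn σ i a ∧ PrimaryIn σ i b :=
  ⟨fun h => ⟨fun p hp hpa => h p hp (hpa.mul_right b), fun p hp hpb => h p hp (hpb.mul_left a)⟩,
    fun h p hp hpab => (hp.dvd_mul.mp hpab).elim (h.1 p hp) (h.2 p hp)⟩

theorem finite_setOf_memSigma (hσ : IsPrimePartition σ) (G : Type*) [Group G] [Finite G] :
    {i | MemSigma σ i G}.Finite := by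
  refine ((Nat.card G).primeFactors.finite_toSet.biUnion fun p hp => ?_).subset
    fun i ⟨p, hp, hpi, hpG⟩ =>
      Set.mem_biUnion (Nat.mem_primeFactors.mpr ⟨hp, hpG, Nat.card_pos.ne'⟩) hpi
  obtain ⟨i, hi, huniq⟩ := hσ.2 p (Nat.prime_of_mem_primeFactors hp)
  exact (Set.subsingleton_of_forall_eq i fun j hj => huniq j hj).finite

end Partition

section PiSubgroup

variable {G : Type*} [Group G] {π π' : Set ℕ} {A B : Subgroup G}

theorem IsHall.isPiSubgroup (hA : IsHall π A) : IsPiSubgroup π A :=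
  hA.1

theorem IsPiSubgroup.mono (h : π ⊆ π') (hA : IsPiSubgroup π A) : IsPiSubgroup π' A :=
  fun p hp hpA => h (hA p hp hpA)

theorem IsPiSubgroup.disjoint_of_compl (hA : IsPiSubgroup π A) (hB : IsPiSubgroup πᶜ B) :
    Disjoint A B :=
  Subgroup.disjoint_of_coprime_natCard <|
    Nat.coprime_of_dvd fun p hp hpA hpB => hB p hp hpB (hA p hp hpA)

theorem card_mul_relIndex (h : A ≤ B) : Nat.card A * A.relIndex B = Nat.card B := by
  rw [Subgroup.relIndex, ← Nat.card_congr (Subgroup.subgroupOfEquivOfLe h).toEquiv,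
    Subgroup.card_mul_index]

theorem IsPiSubgroup.sup [A.Normal] (hA : IsPiSubgroup π A) (hB : IsPiSubgroup π B) :
    IsPiSubgroup π (A ⊔ B) := by
  intro p hp hpAB
  rw [← card_mul_relIndex le_sup_left, Subgroup.relIndex_sup_left] at hpAB
  exact (hp.dvd_mul.mp hpAB).elim (hA p hp) fun h => hB p hp (h.trans (A.relIndex_dvd_card B))

theorem IsPiSubgroup.biSup {ι : Type*} {H : ι → Subgroup G} (s : Finset ι)
    (hn : ∀ i ∈ s, (H i).Normal) (hH : ∀ i ∈ s, IsPiSubgroup π (H i)) :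
    IsPiSubgroup π (⨆ i ∈ s, H i) := by
  classical
  induction s using Finset.induction_on with
  | empty =>
    simp only [Finset.notMem_empty, iSup_false, iSup_bot]
    exact fun p hp hp1 => absurd (by rwa [Subgroup.card_bot] at hp1) hp.not_dvd_one
  | insert a s _ ih =>
    rw [Finset.iSup_insert]
    have := hn a (Finset.mem_insert_self a s)
    exact (hH a (Finset.mem_insert_self a s)).sup <|
      ih (fun i hi => hn i (Finset.mem_insert_of_mem hi))
        fun i hi => hH i (Finset.mem_insert_of_mem hi)

end PiSubgroup

open scoped commutatorElement

section ChiefCentralizer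

variable {G : Type*} [Group G]

/-- `C_G(H/K)` as a subgroup: the preimage of the centralizer of `HK/K` in `G/K`. -/
def chiefCentralizerSubgroup (H K : Subgroup G) [K.Normal] : Subgroup G :=
  (Subgroup.centralizer (H.map (QuotientGroup.mk' K))).comap (QuotientGroup.mk' K)

variable {H K : Subgroup G} [K.Normal]

theorem mem_chiefCentralizerSubgroup {g : G} :
    g ∈ chiefCentralizerSubgroup H K ↔ ∀ h ∈ H, ⁅g, h⁆ ∈ K := by
  simp only [chiefCentralizerSubgroup, Subgroup.mem_comap, Subgroup.mem_centralizer_iff,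
    Subgroup.coe_map, Set.forall_mem_image]
  refine forall₂_congr fun h _ => ?_
  rw [← QuotientGroup.eq_one_iff, ← QuotientGroup.mk'_apply, map_commutatorElement,
    commutatorElement_eq_one_iff_mul_comm, eq_comm]

theorem le_chiefCentralizerSubgroup_iff {X : Subgroup G} :
    X ≤ chiefCentralizerSubgroup H K ↔ ⁅X, H⁆ ≤ K := by
  rw [Subgroup.commutator_le]
  exact forall₂_congr fun _ _ => mem_chiefCentralizerSubgroup

theorem card_chiefCentralizer :
    Nat.card (chiefCentralizer H K) = Nat.card (chiefCentralizerSubgroup H K) := by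
  congr! 2
  ext g
  simp [chiefCentralizer, mem_chiefCentralizerSubgroup, commutatorElement_def]

theorem sigmaCentral_iff [Finite G] {ι : Type*} {σ : ι → Set ℕ} (hKH : K ≤ H) :
    SigmaCentral σ H K ↔
      ∃ i, PrimaryIn σ i (K.relIndex H) ∧ PrimaryIn σ i (chiefCentralizerSubgroup H K).index := by
  simp only [SigmaCentral, ← primaryIn_mul_iff, card_chiefCentralizer,
    ← card_mul_relIndex hKH, ← Subgroup.card_mul_index (chiefCentralizerSubgroup H K),
    Nat.mul_div_cancel_left _ Nat.card_pos]

theorem chiefCentralizerSubgroup_bot (N : Subgroup G) :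
    chiefCentralizerSubgroup N ⊥ = Subgroup.centralizer N := by
  ext g
  simp only [mem_chiefCentralizerSubgroup, Subgroup.mem_bot, commutatorElement_eq_one_iff_commute,
    Subgroup.mem_centralizer_iff]
  exact forall₂_congr fun h _ => ⟨fun hc => hc.symm.eq, fun hc => (Commute.eq hc).symm⟩

end ChiefCentralizer

section ChiefFactor

variable {G : Type*} [Group G] {F K : Subgroup G}

theorem relIndex_dvd_index_of_inf_le {N : Subgroup G} [N.Normal]
    (hFN : F ⊓ N ≤ K) : K.relIndex F ∣ N.index :=
  calc K.relIndex F ∣ (F ⊓ N).relIndex F := Subgroup.relIndex_dvd_of_le_left F hFN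
    _ = N.relIndex F := Subgroup.inf_relIndex_left F N
    _ ∣ N.index := Subgroup.relIndex_dvd_index_of_normal N F

theorem IsChiefFactor.relIndex_dvd_card_or_inf_le (hFK : IsChiefFactor F K) (N : Subgroup G)
    [N.Normal] : K.relIndex F ∣ Nat.card N ∨ F ⊓ N ≤ K := by
  obtain ⟨hF, hK, hKF, hmax⟩ := hFK
  rcases hmax ((F ⊓ N) ⊔ K) inferInstance le_sup_right (sup_le inf_le_left hKF.le) with h | h
  · exact Or.inr (le_sup_left.trans h.le)
  · left
    calc K.relIndex F = K.relIndex ((F ⊓ N) ⊔ K) := by rw [h]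
      _ = K.relIndex (F ⊓ N) := Subgroup.relIndex_sup_right _ _
      _ ∣ Nat.card (F ⊓ N : Subgroup G) := K.relIndex_dvd_card _
      _ ∣ Nat.card N := Subgroup.card_dvd_of_le inf_le_right

theorem IsChiefFactor.comap {G' : Type*} [Group G'] {f : G →* G'} (hf : Function.Surjective f)
    {F' K' : Subgroup G'} (hFK : IsChiefFactor F' K') :
    IsChiefFactor (F'.comap f) (K'.comap f) := by
  obtain ⟨hF, hK, hKF, hmax⟩ := hFK
  refine ⟨inferInstance, inferInstance, Subgroup.comap_lt_comap_of_surjective hf |>.mpr hKF,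
    fun L hL hKL hLF => ?_⟩
  have hker : f.ker ≤ L := (Subgroup.ker_le_comap f K').trans hKL
  have hmap := hmax (L.map f) (hL.map f hf)
    (by simpa [Subgroup.map_comap_eq_self_of_surjective hf] using Subgroup.map_mono (f := f) hKL)
    (by simpa [Subgroup.map_comap_eq_self_of_surjective hf] using Subgroup.map_mono (f := f) hLF)
  rw [← Subgroup.comap_map_eq_self hker]
  exact hmap.imp (congrArg _) (congrArg _)

theorem exists_isChiefFactor_bot [Finite G] [Nontrivial G] :
    ∃ N : Subgroup G, IsChiefFactor N ⊥ := by
  obtain ⟨N, hN⟩ := (Set.toFinite {N : Subgroup G | N.Normal ∧ N ≠ ⊥}).exists_minimal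
    ⟨⊤, inferInstance, top_ne_bot⟩
  refine ⟨N, hN.prop.1, inferInstance, bot_lt_iff_ne_bot.mpr hN.prop.2, fun L hL _ hLN => ?_⟩
  by_cases hL0 : L = ⊥
  · exact Or.inl hL0
  · exact Or.inr (hN.eq_of_le ⟨hL, hL0⟩ hLN)

end ChiefFactor

section SigmaNilpotent

variable {ι : Type*} {σ : ι → Set ℕ} {G : Type*} [Group G]

theorem chiefCentralizerSubgroup_comap {G' : Type*} [Group G'] {f : G →* G'}
    (hf : Function.Surjective f) (H' K' : Subgroup G') [K'.Normal] :
    chiefCentralizerSubgroup (H'.comap f) (K'.comap f) =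
      (chiefCentralizerSubgroup H' K').comap f := by
  ext g
  simp only [Subgroup.mem_comap, mem_chiefCentralizerSubgroup, map_commutatorElement]
  exact (hf.forall (p := fun h => h ∈ H' → ⁅f g, h⁆ ∈ K')).symm

theorem SigmaNilpotent.of_surjective [Finite G] {G' : Type*} [Group G'] {f : G →* G'}
    (hf : Function.Surjective f) (hG : SigmaNilpotent σ G) : SigmaNilpotent σ G' := by
  have : Finite G' := Finite.of_surjective f hf
  intro F' K' hFK
  have := hFK.2.1
  obtain ⟨i, hi⟩ := (sigmaCentral_iff (hFK.comap hf).2.2.1.le).mp (hG _ _ (hFK.comap hf))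
  refine (sigmaCentral_iff hFK.2.2.1.le).mpr ⟨i, ?_⟩
  rwa [Subgroup.relIndex_comap, Subgroup.map_comap_eq_self_of_surjective hf,
    chiefCentralizerSubgroup_comap hf, Subgroup.index_comap_of_surjective _ hf] at hi

theorem sigmaNilpotent_of_forall_exists_normal_isHall [Finite G] (hσ : IsPrimePartition σ)
    (hH : ∀ i, MemSigma σ i G → ∃ H : Subgroup G, H.Normal ∧ IsHall (σ i) H) :
    SigmaNilpotent σ G := by
  have hall : ∀ p, p.Prime → p ∣ Nat.card G →
      ∃ i, p ∈ σ i ∧ ∃ H : Subgroup G, H.Normal ∧ IsHall (σ i) H := fun p hp hpG =>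
    let ⟨i, hpi, _⟩ := hσ.2 p hp
    ⟨i, hpi, hH i ⟨p, hp, hpi, hpG⟩⟩
  intro F K hFK
  have := hFK.1
  have := hFK.2.1
  have hKF : K < F := hFK.2.2.1
  obtain ⟨p, hp, hpFK⟩ := Nat.exists_prime_and_dvd (n := K.relIndex F)
    (by rw [Ne, Subgroup.relIndex_eq_one]; exact hKF.not_ge)
  obtain ⟨i, hpi, H, hHn, hH⟩ :=
    hall p hp (hpFK.trans ((K.relIndex_dvd_card F).trans F.card_subgroup_dvd_card))
  have hFK_i : PrimaryIn σ i (K.relIndex F) := by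
    rcases hFK.relIndex_dvd_card_or_inf_le H with h | h
    · exact fun q hq hqd => hH.1 q hq (hqd.trans h)
    · exact absurd hpi (hH.2 p hp (hpFK.trans (relIndex_dvd_index_of_inf_le h)))
  refine (sigmaCentral_iff hKF.le).mpr ⟨i, hFK_i, fun q hq hqC => ?_⟩
  obtain ⟨k, hqk, L, hLn, hL⟩ := hall q hq (hqC.trans (Subgroup.index_dvd_card _))
  by_contra hqi
  have hki : k ≠ i := fun e => hqi (e ▸ hqk)
  have hLC : L ≤ chiefCentralizerSubgroup F K := by
    rw [le_chiefCentralizerSubgroup_iff]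
    refine (Subgroup.commutator_le_inf L F).trans (inf_comm L F ▸ ?_)
    rcases hFK.relIndex_dvd_card_or_inf_le L with h | h
    · exact absurd hpi (Set.disjoint_left.mp (hσ.disjoint hki) (hL.1 p hp (hpFK.trans h)))
    · exact h
  exact hL.2 q hq (hqC.trans (Subgroup.index_dvd_of_le hLC)) hqk

end SigmaNilpotent

section Hall

variable {G : Type*} [Group G] {π : Set ℕ}

theorem le_of_coprime_card_index {U C : Subgroup G} [C.Normal]
    (h : Nat.Coprime (Nat.card U) C.index) : U ≤ C :=
  Subgroup.relIndex_eq_one.mp <|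
    Nat.eq_one_of_dvd_coprimes h (C.relIndex_dvd_card U) (C.relIndex_dvd_index_of_normal U)

theorem relIndex_comap_mk' (N : Subgroup G) [N.Normal] (Q : Subgroup (G ⧸ N)) :
    N.relIndex (Q.comap (QuotientGroup.mk' N)) = Nat.card Q := by
  have h := Subgroup.relIndex_ker (K := Q.comap (QuotientGroup.mk' N)) (QuotientGroup.mk' N)
  rwa [QuotientGroup.ker_mk',
    Subgroup.map_comap_eq_self_of_surjective (QuotientGroup.mk'_surjective N)] at h

theorem IsHall.comap_mk' {N : Subgroup G} [N.Normal] (hN : IsPiSubgroup π N)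
    {Q : Subgroup (G ⧸ N)} (hQ : IsHall π Q) : IsHall π (Q.comap (QuotientGroup.mk' N)) := by
  refine ⟨fun p hp hpM => ?_, fun p hp hpM => hQ.2 p hp ?_⟩
  · rw [← card_mul_relIndex (QuotientGroup.le_comap_mk' N Q), relIndex_comap_mk'] at hpM
    exact (hp.dvd_mul.mp hpM).elim (hN p hp) (hQ.1 p hp)
  · rwa [Subgroup.index_comap_of_surjective _ (QuotientGroup.mk'_surjective N)] at hpM

theorem exists_sup_eq_card_eq_relIndex_of_coprime [Finite G] {N M : Subgroup G} [N.Normal]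
    (hNM : N ≤ M)
    (hcop : Nat.Coprime (Nat.card N) (N.relIndex M)) :
    ∃ U ≤ M, N ⊔ U = M ∧ Nat.card U = N.relIndex M := by
  have hcard : Nat.card (N.subgroupOf M) = Nat.card N :=
    Nat.card_congr (Subgroup.subgroupOfEquivOfLe hNM).toEquiv
  obtain ⟨V, hV⟩ := Subgroup.exists_right_complement'_of_coprime (N := N.subgroupOf M)
    (by rwa [hcard])
  refine ⟨V.map M.subtype, Subgroup.map_subtype_le V, ?_, ?_⟩
  · have := congrArg (Subgroup.map M.subtype) hV.sup_eq_top
    rwa [Subgroup.map_sup, Subgroup.subgroupOf_map_subtype, inf_of_le_left hNM,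
      ← MonoidHom.range_eq_map, Subgroup.range_subtype] at this
  · rw [Subgroup.card_map_of_injective M.subtype_injective]
    have := hV.card_mul_card
    rw [hcard, ← card_mul_relIndex hNM] at this
    exact Nat.eq_of_mul_eq_mul_left Nat.card_pos this

/-- `U` consists of the elements of `M = NU` whose order divides `|U|`, a conjugation-invariant
condition. -/
theorem normal_of_sup_eq_of_le_centralizer {N U M : Subgroup G} [N.Normal] [M.Normal]
    (hNU : N ⊔ U = M) (hU : U ≤ Subgroup.centralizer (N : Set G))
    (hcop : Nat.Coprime (Nat.card N) (Nat.card U)) : U.Normal := by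
  refine ⟨fun u hu g => ?_⟩
  have hpowU {x : G} (hx : x ∈ U) : x ^ Nat.card U = 1 :=
    orderOf_dvd_iff_pow_eq_one.mp (U.orderOf_dvd_natCard hx)
  obtain ⟨n, hn, v, hv, hnv⟩ := Subgroup.mem_sup_of_normal_left.mp
    (hNU ▸ ‹M.Normal›.conj_mem u (hNU ▸ Subgroup.mem_sup_right hu) g)
  have hnv_comm : Commute n v := Subgroup.mem_centralizer_iff.mp (hU hv) n hn
  have hn1 : n ^ Nat.card U = 1 :=
    calc n ^ Nat.card U = n ^ Nat.card U * v ^ Nat.card U := by rw [hpowU hv, mul_one]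
      _ = (g * u * g⁻¹) ^ Nat.card U := by rw [← hnv_comm.mul_pow, hnv]
      _ = 1 := by rw [conj_pow, hpowU hu, mul_one, mul_inv_cancel]
  have : n = 1 := orderOf_eq_one_iff.mp <|
    Nat.eq_one_of_dvd_coprimes hcop (N.orderOf_dvd_natCard hn) (orderOf_dvd_of_pow_eq_one hn1)
  rwa [← hnv, this, one_mul]

theorem exists_normal_isHall_of_quotient [Finite G] {N : Subgroup G} [N.Normal]
    (hN : IsPiSubgroup πᶜ N)
    (hC : ∀ p, p.Prime → p ∣ (Subgroup.centralizer (N : Set G)).index → p ∉ π)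
    {Q : Subgroup (G ⧸ N)} [Q.Normal] (hQ : IsHall π Q) :
    ∃ U : Subgroup G, U.Normal ∧ IsHall π U := by
  set M := Q.comap (QuotientGroup.mk' N)
  have hNM : N ≤ M := QuotientGroup.le_comap_mk' N Q
  obtain ⟨U, hUM, hNU, hU⟩ := exists_sup_eq_card_eq_relIndex_of_coprime hNM <| by
    rw [relIndex_comap_mk']
    exact Nat.coprime_of_dvd fun p hp hpN hpQ => hN p hp hpN (hQ.1 p hp hpQ)
  rw [relIndex_comap_mk'] at hU
  have hUπ : IsPiSubgroup π U := fun p hp hpU => hQ.1 p hp (hU ▸ hpU)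
  have hUC : U ≤ Subgroup.centralizer (N : Set G) := le_of_coprime_card_index <|
    Nat.coprime_of_dvd fun p hp hpU hpC => hC p hp hpC (hUπ p hp hpU)
  have hUn : U.Normal := normal_of_sup_eq_of_le_centralizer hNU hUC <|
    Nat.coprime_of_dvd fun p hp hpN hpU => hN p hp hpN (hUπ p hp hpU)
  refine ⟨U, hUn, hUπ, fun p hp hpU => ?_⟩
  have hMQ : M.index = Q.index :=
    Subgroup.index_comap_of_surjective _ (QuotientGroup.mk'_surjective N)
  rw [← Subgroup.relIndex_mul_index hUM, hMQ, ← hNU, Subgroup.relIndex_sup_right] at hpU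
  exact (hp.dvd_mul.mp hpU).elim (fun h => hN p hp (h.trans (U.relIndex_dvd_card N))) (hQ.2 p hp)

end Hall

section Main

variable {ι : Type*} {σ : ι → Set ℕ}

theorem SigmaNilpotent.exists_normal_isHall (hσ : IsPrimePartition σ) {G : Type*} [Group G]
    [Finite G] (hG : SigmaNilpotent σ G) (i : ι) : ∃ H : Subgroup G, H.Normal ∧ IsHall (σ i) H := by
  induction hn : Nat.card G using Nat.strong_induction_on generalizing G with
  | _ n ih =>
  rcases subsingleton_or_nontrivial G with hG1 | hG1
  · refine ⟨⊥, inferInstance, ?_⟩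
    simp only [IsHall, Subgroup.card_bot, Subgroup.index_bot, Nat.card_of_subsingleton (1 : G)]
    exact ⟨fun p hp h => absurd h hp.not_dvd_one, fun p hp h => absurd h hp.not_dvd_one⟩
  obtain ⟨N, hN⟩ := exists_isChiefFactor_bot (G := G)
  have := hN.1
  obtain ⟨j, hjN, hjC⟩ := (sigmaCentral_iff bot_le).mp (hG N ⊥ hN)
  rw [Subgroup.relIndex_bot_left] at hjN
  rw [chiefCentralizerSubgroup_bot] at hjC
  have hlt : Nat.card (G ⧸ N) < n := by
    rw [← hn, Subgroup.card_eq_card_quotient_mul_card_subgroup N]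
    exact lt_mul_of_one_lt_right Nat.card_pos
      ((Subgroup.one_lt_card_iff_ne_bot N).mpr hN.2.2.1.ne')
  obtain ⟨Q, hQn, hQ⟩ := ih _ hlt (hG.of_surjective (QuotientGroup.mk'_surjective N)) rfl
  by_cases hij : i = j
  · subst hij
    exact ⟨_, inferInstance, hQ.comap_mk' hjN⟩
  · have hji := Set.disjoint_right.mp (hσ.disjoint hij)
    exact exists_normal_isHall_of_quotient (fun p hp hpN => hji (hjN p hp hpN))
      (fun p hp hpC => hji (hjC p hp hpC)) hQ

theorem biSup_eq_top_of_isHall (hσ : IsPrimePartition σ) {G : Type*} [Group G]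
    {s : Finset ι} (hs : ∀ i, MemSigma σ i G → i ∈ s) {H : ι → Subgroup G}
    (hH : ∀ i ∈ s, IsHall (σ i) (H i)) : ⨆ i ∈ s, H i = ⊤ := by
  rw [← Subgroup.index_eq_one, Nat.eq_one_iff_not_exists_prime_dvd]
  intro p hp hpT
  obtain ⟨i, hpi, -⟩ := hσ.2 p hp
  have hi := hs i ⟨p, hp, hpi, hpT.trans (Subgroup.index_dvd_card _)⟩
  exact (hH i hi).2 p hp (hpT.trans (Subgroup.index_dvd_of_le (le_biSup H hi))) hpi

end Main

/-- `G` is σ-nilpotent iff `G` is the internal direct product of a complete Hall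
σ-set `{H i | i ∈ s}`, where `s` corresponds exactly to `σ(G)`. -/
theorem sigmaNilpotent_iff_internal_direct_product_of_hall
    {ι : Type*} [DecidableEq ι] (σ : ι → Set ℕ) (hσ : IsPrimePartition σ)
    (G : Type*) [Group G] [Finite G] :
    SigmaNilpotent σ G ↔
      ∃ (s : Finset ι) (H : ι → Subgroup G),
        (∀ i, i ∈ s ↔ MemSigma σ i G) ∧
        (∀ i ∈ s, IsHall (σ i) (H i) ∧ (H i).Normal) ∧
        (∀ i ∈ s, ∀ j ∈ s, i ≠ j → ∀ x ∈ H i, ∀ y ∈ H j, Commute x y) ∧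
        (⨆ i ∈ s, H i) = ⊤ ∧
        (∀ i ∈ s, H i ⊓ (⨆ j ∈ s.erase i, H j) = ⊥) := by
  refine ⟨fun hG => ?_, fun ⟨s, H, hs, hH, _⟩ => sigmaNilpotent_of_forall_exists_normal_isHall hσ
    fun i hi => ⟨H i, (hH i ((hs i).mpr hi)).2, (hH i ((hs i).mpr hi)).1⟩⟩
  choose H hHn hH using hG.exists_normal_isHall hσ
  have hcompl {i j : ι} (hij : i ≠ j) : IsPiSubgroup (σ i)ᶜ (H j) :=
    (hH j).isPiSubgroup.mono (Set.disjoint_right.mp (hσ.disjoint hij))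
  set s := (finite_setOf_memSigma hσ G).toFinset
  have hs (i : ι) : i ∈ s ↔ MemSigma σ i G := Set.Finite.mem_toFinset _
  refine ⟨s, H, hs, fun i _ => ⟨hH i, hHn i⟩, fun i _ j _ hij x hx y hy => ?_,
    biSup_eq_top_of_isHall hσ (fun i => (hs i).mpr) fun i _ => hH i, fun i _ => ?_⟩
  · exact Subgroup.commute_of_normal_of_disjoint _ _ (hHn i) (hHn j)
      ((hH i).isPiSubgroup.disjoint_of_compl (hcompl hij)) x y hx hy
  · refine disjoint_iff.mp ((hH i).isPiSubgroup.disjoint_of_compl ?_)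
    exact IsPiSubgroup.biSup _ (fun j _ => hHn j) fun j hj =>
      hcompl (Finset.ne_of_mem_erase hj).symm
end

section
/- Let A and B be subgroups of a finite group G such that G ≠ AB and AB^x = B^xA for all x ∈ G. Then G has a proper normal subgroup N such that A ≤ N or B ≤ N. -/
open Pointwise

/-!
Among the subgroups `X` of `G` that contain a conjugate of `B`, all of whose conjugates permute
with `A`, and with `AX ≠ G`, pick a maximal one (`B` itself is such a subgroup). These conditions
are invariant under conjugation (the last one because `AX^g = G` forces `AX = G`), so every
conjugate of `X` is maximal as well. For `a ∈ A` the subgroup `X ⊔ X^a` lies in the subgroup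
`AX`, so it satisfies the conditions again and maximality gives `X^a = X`. Hence `A` normalizes
every conjugate of `X`. If `X` is normal it is a proper normal subgroup containing `B`; otherwise
the normal core of `N_G(X)` is a proper normal subgroup containing `A`.
-/

open ConjAct

namespace Subgroup

variable {G : Type*} [Group G]

theorem coe_sup_eq_mul_of_mul_comm {A H : Subgroup G} (h : (A : Set G) * H = H * A) :
    ((A ⊔ H : Subgroup G) : Set G) = A * H := by
  refine subset_antisymm (fun x hx => ?_) (Set.mul_subset_iff.2 fun a ha y hy => mul_mem_sup ha hy)
  rw [sup_eq_closure_mul] at hx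
  induction hx using closure_induction with
  | mem x hx => exact hx
  | one => exact ⟨1, one_mem A, 1, one_mem H, mul_one 1⟩
  | mul x y _ _ hx hy =>
    have hmul : (A : Set G) * H * (A * H) = A * H := by
      rw [mul_assoc, ← mul_assoc (H : Set G), ← h, mul_assoc, coe_mul_coe, ← mul_assoc,
        coe_mul_coe]
    exact hmul ▸ Set.mul_mem_mul hx hy
  | inv x _ hx =>
    have hinv : ((A : Set G) * H)⁻¹ = A * H := by
      rw [mul_inv_rev, inv_coe_set, inv_coe_set, h]
    exact hinv ▸ Set.inv_mem_inv.2 hx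

theorem mul_iSup_comm {ι : Sort*} {A : Subgroup G} {H : ι → Subgroup G}
    (h : ∀ i, (A : Set G) * H i = H i * A) :
    (A : Set G) * ↑(⨆ i, H i) = ↑(⨆ i, H i) * A := by
  set L := ⨆ i, H i
  have hsub : (A : Set G) * L ⊆ L * A := by
    rintro _ ⟨a, ha, l, hl, rfl⟩
    refine iSup_induction H (C := fun l => ∀ a ∈ A, a * l ∈ (L : Set G) * A) hl ?_ ?_ ?_ a ha
    · intro i x hx a ha
      exact Set.mul_subset_mul_right (SetLike.coe_subset_coe.2 (le_iSup H i))
        (h i ▸ Set.mul_mem_mul ha hx)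
    · exact fun a ha => ⟨1, one_mem L, a, ha, by group⟩
    · intro x y hx hy a ha
      obtain ⟨l₁, hl₁, a₁, ha₁, he₁ : l₁ * a₁ = a * x⟩ := hx a ha
      obtain ⟨l₂, hl₂, a₂, ha₂, he₂ : l₂ * a₂ = a₁ * y⟩ := hy a₁ ha₁
      refine ⟨l₁ * l₂, mul_mem hl₁ hl₂, a₂, ha₂, ?_⟩
      show l₁ * l₂ * a₂ = a * (x * y)
      rw [mul_assoc, he₂, ← mul_assoc, he₁, mul_assoc]
  refine hsub.antisymm ?_
  rw [← Set.inv_subset_inv, mul_inv_rev, mul_inv_rev, inv_coe_set, inv_coe_set]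
  exact hsub

theorem mul_sup_comm {A H K : Subgroup G} (hH : (A : Set G) * H = H * A)
    (hK : (A : Set G) * K = K * A) :
    (A : Set G) * ↑(H ⊔ K) = ↑(H ⊔ K) * A := by
  rw [sup_eq_iSup]
  exact mul_iSup_comm (Bool.forall_bool.2 ⟨hK, hH⟩)

theorem mul_eq_univ_of_mul_smul_eq_univ {A X : Subgroup G} {c : ConjAct G}
    (h : (A : Set G) * ((c • X : Subgroup G) : Set G) = Set.univ) :
    (A : Set G) * (X : Set G) = Set.univ := by
  set g := ofConjAct c
  have hc : c = toConjAct g := rfl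
  have hmem : ∀ v, ∃ a ∈ A, ∃ x ∈ X, a * (g * x * g⁻¹) = v := by
    intro v
    obtain ⟨a, ha, _, hy, he⟩ := Set.eq_univ_iff_forall.1 h v
    obtain ⟨x, hx, rfl⟩ := (mem_smul_pointwise_iff_exists _ _ _).1 hy
    exact ⟨a, ha, x, hx, by rwa [hc, toConjAct_smul] at he⟩
  -- `g⁻¹ ∈ A X^g` puts `g` in `A X`, and then `G = A X^g g = A g X = A X`.
  obtain ⟨a₀, ha₀, x₀, hx₀, h₀⟩ := hmem g⁻¹
  have hg : g = a₀⁻¹ * x₀⁻¹ := by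
    calc g = a₀⁻¹ * (a₀ * (g * x₀ * g⁻¹)) * g * x₀⁻¹ := by group
      _ = a₀⁻¹ * x₀⁻¹ := by rw [h₀]; group
  refine Set.eq_univ_of_forall fun u => ?_
  obtain ⟨a, ha, x, hx, hu⟩ := hmem (u * g⁻¹)
  refine ⟨a * a₀⁻¹, mul_mem ha (inv_mem ha₀), x₀⁻¹ * x, mul_mem (inv_mem hx₀) hx, ?_⟩
  calc a * a₀⁻¹ * (x₀⁻¹ * x) = a * (a₀⁻¹ * x₀⁻¹) * x := by group
    _ = a * (g * x * g⁻¹) * g := by rw [← hg]; group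
    _ = u := by rw [hu]; group

theorem maximal_smul {α : Type*} [Group α] [MulDistribMulAction α G] {P : Subgroup G → Prop}
    (hP : ∀ (a : α) (Y : Subgroup G), P Y → P (a • Y)) {X : Subgroup G} (hX : Maximal P X)
    (a : α) : Maximal P (a • X) := by
  refine ⟨hP a X hX.1, fun Y hY hle => ?_⟩
  rw [pointwise_smul_subset_iff] at hle
  exact subset_pointwise_smul_iff.2 (hX.2 (hP a⁻¹ Y hY) hle)

structure IsKegelCandidate (A B X : Subgroup G) : Prop where
  exists_smul_le : ∃ c : ConjAct G, c • B ≤ X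
  mul_smul_eq_smul_mul : ∀ c : ConjAct G,
    (A : Set G) * ((c • X : Subgroup G) : Set G) = ((c • X : Subgroup G) : Set G) * A
  mul_ne_univ : (A : Set G) * (X : Set G) ≠ Set.univ

namespace IsKegelCandidate

variable {A B X : Subgroup G}

theorem ne_top (hX : IsKegelCandidate A B X) : X ≠ ⊤ := by
  rintro rfl
  exact hX.mul_ne_univ (by rw [coe_top, Set.mul_univ ⟨1, one_mem A⟩])

theorem smul (hX : IsKegelCandidate A B X) (c : ConjAct G) : IsKegelCandidate A B (c • X) where
  exists_smul_le := by
    obtain ⟨d, hd⟩ := hX.exists_smul_le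
    exact ⟨c * d, by rwa [mul_smul, pointwise_smul_le_pointwise_smul_iff]⟩
  mul_smul_eq_smul_mul d := by
    rw [smul_smul]
    exact hX.mul_smul_eq_smul_mul (d * c)
  mul_ne_univ h := hX.mul_ne_univ (mul_eq_univ_of_mul_smul_eq_univ h)

theorem sup_smul (hX : IsKegelCandidate A B X) {a : G} (ha : a ∈ A) :
    IsKegelCandidate A B (X ⊔ toConjAct a • X) where
  exists_smul_le := by
    obtain ⟨c, hc⟩ := hX.exists_smul_le
    exact ⟨c, hc.trans le_sup_left⟩
  mul_smul_eq_smul_mul c := by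
    rw [smul_sup, smul_smul]
    exact mul_sup_comm (hX.mul_smul_eq_smul_mul c) (hX.mul_smul_eq_smul_mul _)
  mul_ne_univ h := by
    have hle : X ⊔ toConjAct a • X ≤ A ⊔ X := by
      refine sup_le le_sup_right fun y hy => ?_
      obtain ⟨x, hx, rfl⟩ := (mem_smul_pointwise_iff_exists _ _ _).1 hy
      rw [toConjAct_smul]
      exact mul_mem (mul_mem (mem_sup_left ha) (mem_sup_right hx)) (inv_mem (mem_sup_left ha))
    refine hX.mul_ne_univ (Set.eq_univ_of_univ_subset (h ▸ ?_))
    calc (A : Set G) * ↑(X ⊔ toConjAct a • X) ⊆ A * ↑(A ⊔ X) :=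
          Set.mul_subset_mul_left (SetLike.coe_subset_coe.2 hle)
      _ = A * (X : Set G) := by
        rw [coe_sup_eq_mul_of_mul_comm (by simpa using hX.mul_smul_eq_smul_mul 1), ← mul_assoc,
          coe_mul_coe]

end IsKegelCandidate

variable {A B X : Subgroup G}

theorem le_normalizer_of_maximal_isKegelCandidate (hX : Maximal (IsKegelCandidate A B) X) :
    A ≤ normalizer X := by
  have hle : ∀ a ∈ A, toConjAct a • X ≤ X := fun a ha =>
    le_sup_right.trans (hX.eq_of_ge (hX.1.sup_smul ha) le_sup_left).le
  intro a ha
  refine conjAct_pointwise_smul_iff.1 (le_antisymm (hle a ha) ?_)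
  rw [subset_pointwise_smul_iff, ← toConjAct_inv]
  exact hle a⁻¹ (inv_mem ha)

theorem le_normalCore_normalizer_of_maximal_isKegelCandidate
    (hX : Maximal (IsKegelCandidate A B) X) : A ≤ (normalizer X).normalCore := by
  intro a ha b
  have hb := le_normalizer_of_maximal_isKegelCandidate
    (maximal_smul (fun c _ hY => hY.smul c) hX (toConjAct b⁻¹)) ha
  rw [← conjAct_pointwise_smul_iff] at hb ⊢
  rw [map_mul, map_mul, mul_smul, mul_smul, hb, map_inv, smul_inv_smul]

end Subgroup

/-- Kegel: if `G ≠ AB` and `A B^x = B^x A` for all `x`, then some proper normal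
subgroup contains `A` or `B`. -/
theorem proper_normal_subgroup_of_permutable
    (G : Type*) [Group G] [Finite G] (A B : Subgroup G)
    (hne : (A : Set G) * (B : Set G) ≠ Set.univ)
    (hperm : ∀ x : G,
      (A : Set G) * ((Subgroup.map (MulAut.conj x).toMonoidHom B : Subgroup G) : Set G) =
      ((Subgroup.map (MulAut.conj x).toMonoidHom B : Subgroup G) : Set G) * (A : Set G)) :
    ∃ N : Subgroup G, N.Normal ∧ N ≠ ⊤ ∧ (A ≤ N ∨ B ≤ N) := by
  -- `toConjAct x • B` unfolds to `B.map (MulAut.conj x).toMonoidHom`.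
  have hB : Subgroup.IsKegelCandidate A B B :=
    ⟨⟨1, (one_smul _ B).le⟩, fun c => hperm (ofConjAct c), hne⟩
  obtain ⟨X, hX : Maximal (Subgroup.IsKegelCandidate A B) X⟩ :=
    (Set.toFinite {X | Subgroup.IsKegelCandidate A B X}).exists_maximal ⟨B, hB⟩
  by_cases hN : X.Normal
  · obtain ⟨c, hc⟩ := hX.1.exists_smul_le
    refine ⟨X, hN, hX.1.ne_top, Or.inr ?_⟩
    rwa [Subgroup.pointwise_smul_subset_iff, hN.conjAct] at hc
  · refine ⟨_, Subgroup.normalCore_normal _, ?_,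
      Or.inl (Subgroup.le_normalCore_normalizer_of_maximal_isKegelCandidate hX)⟩
    exact ne_top_of_le_ne_top (mt Subgroup.normalizer_eq_top_iff.1 hN) (Subgroup.normalCore_le _)
end

section
/- Let G = AB be a finite group that is the product of two proper subgroups A and B. Then: (1) there exist Sylow p-subgroups G_p, A_p, B_p of G, A, B respectively such that G_p = A_pB_p; (2) for every x ∈ G, G = A^xB and G ≠ AA^x. -/
open Pointwise

/-!
Since `G = BA`, a Sylow `p`-subgroup of `G` containing a Sylow subgroup of `A` and one
containing a Sylow subgroup of `B` are conjugate by some `ba` with `b ∈ B`, `a ∈ A`;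
conjugating back by `a` and `b⁻¹` places conjugates `A_p ≤ A` and `B_p ≤ B` of both inside
one Sylow subgroup `G_p`. The product formula `|A_p B_p| · |A_p ∩ B_p| = |A_p| · |B_p|`,
compared with `|G| · |A ∩ B| = |A| · |B|` and `|A_p ∩ B_p| ≤ |A ∩ B|_p`, gives
`|A_p B_p| ≥ |G|_p`, so `A_p B_p = G_p`.

For `x = ba` the conjugate of `A` by `x` is its conjugate by `b`, and `bAb⁻¹ B = b (AB)`.
If `A · xAx⁻¹ = G`, writing `x⁻¹` in this product shows `x ∈ A`, so the product is `A ≠ G`.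
-/

section

variable {G : Type*} [Group G]

theorem Subgroup.card_coe_mul (H K : Subgroup G) :
    Nat.card ((H : Set G) * (K : Set G)) = Nat.card K * K.relIndex H := by
  -- `HK` is the preimage in `G` of the `H`-orbit of the trivial coset in `G ⧸ K`.
  have hsmul : ∀ h : H, h • ((1 : G) : G ⧸ K) = ((h : G) : G ⧸ K) := fun h =>
    congrArg _ (mul_one (h : G))
  have horbit : MulAction.orbit H ((1 : G) : G ⧸ K) = ((↑) : G → G ⧸ K) '' H := by
    ext y; simp [MulAction.mem_orbit_iff, hsmul, eq_comm]
  have hstab : MulAction.stabilizer H ((1 : G) : G ⧸ K) = K.subgroupOf H := by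
    ext h; simp [Subgroup.mem_subgroupOf, hsmul, QuotientGroup.eq]
  rw [← QuotientGroup.preimage_image_mk_eq_mul, QuotientGroup.card_preimage_mk, Subgroup.relIndex,
    ← hstab, MulAction.index_stabilizer, horbit, Nat.card_coe_set_eq]

theorem Subgroup.card_coe_mul_mul_card_inf (H K : Subgroup G) :
    Nat.card ((H : Set G) * (K : Set G)) * Nat.card ↥(H ⊓ K) = Nat.card H * Nat.card K := by
  rw [card_coe_mul, mul_assoc, ← inf_relIndex_left, mul_comm (relIndex _ _),
    ← relIndex_bot_left (H ⊓ K), relIndex_mul_relIndex _ _ _ bot_le inf_le_left,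
    relIndex_bot_left, mul_comm]

theorem Subgroup.coe_mul_coe_eq_univ_comm {H K : Subgroup G}
    (h : (H : Set G) * (K : Set G) = Set.univ) : (K : Set G) * (H : Set G) = Set.univ := by
  rw [← inv_coe_set (H := H), ← inv_coe_set (H := K), ← mul_inv_rev, h, Set.inv_univ]

theorem Subgroup.conj_smul_coe_mul_eq_univ {A B : Subgroup G}
    (hAB : (A : Set G) * (B : Set G) = Set.univ) (x : G) :
    ((MulAut.conj x • A : Subgroup G) : Set G) * (B : Set G) = Set.univ := by
  obtain ⟨b, hb, a, ha, rfl⟩ : x ∈ (B : Set G) * (A : Set G) := by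
    rw [coe_mul_coe_eq_univ_comm hAB]; trivial
  rw [map_mul, mul_smul, conj_smul_eq_self_of_mem ha, Set.eq_univ_iff_forall]
  intro g
  obtain ⟨a', ha', b', hb', hab'⟩ : b⁻¹ * g ∈ (A : Set G) * (B : Set G) := by
    rw [hAB]; trivial
  refine ⟨b * a' * b⁻¹, smul_mem_pointwise_smul a' (MulAut.conj b) A ha', b * b',
    mul_mem hb hb', ?_⟩
  dsimp only at hab' ⊢
  simp only [mul_assoc, inv_mul_cancel_left, hab', mul_inv_cancel_left]

theorem Subgroup.coe_mul_conj_smul_ne_univ {A : Subgroup G} (hA : A ≠ ⊤) (x : G) :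
    (A : Set G) * ((MulAut.conj x • A : Subgroup G) : Set G) ≠ Set.univ := by
  intro h
  obtain ⟨a, ha, y, hy, hxy⟩ :
      x⁻¹ ∈ (A : Set G) * ((MulAut.conj x • A : Subgroup G) : Set G) := by
    rw [h]; trivial
  have hx : x ∈ A := by
    obtain ⟨a', ha', rfl⟩ := (mem_smul_pointwise_iff_exists _ _ _).mp hy
    rw [MulAut.smul_def, MulAut.conj_apply] at hxy
    have h1 : a * x * a' = 1 := mul_right_cancel (b := x⁻¹) (by simpa [mul_assoc] using hxy)
    rw [show x = a⁻¹ * (a * x * a') * a'⁻¹ by group, h1, mul_one]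
    exact mul_mem (inv_mem ha) (inv_mem ha')
  rw [conj_smul_eq_self_of_mem hx, coe_mul_coe, coe_eq_univ] at h
  exact hA h

section Sylow

variable [Finite G] {p : ℕ} [Fact p.Prime]

theorem IsPGroup.card_dvd_ordProj_of_le {H K : Subgroup G} (hH : IsPGroup p H) (hHK : H ≤ K) :
    Nat.card H ∣ ordProj[p] (Nat.card K) := by
  obtain ⟨k, hk⟩ := IsPGroup.iff_card.mp hH
  rw [hk]
  exact (Nat.Prime.pow_dvd_iff_dvd_ordProj Fact.out Nat.card_pos.ne').mp
    (hk ▸ Subgroup.card_dvd_of_le hHK)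

theorem Subgroup.not_dvd_relIndex_of_card_eq_ordProj {H K : Subgroup G} (hHK : H ≤ K)
    (hH : Nat.card H = ordProj[p] (Nat.card K)) : ¬ p ∣ H.relIndex K := by
  have hmul := relIndex_mul_relIndex ⊥ H K bot_le hHK
  rw [relIndex_bot_left, relIndex_bot_left, hH] at hmul
  rw [Nat.eq_div_of_mul_eq_right (Nat.ordProj_pos _ p).ne' hmul]
  exact Nat.not_dvd_ordCompl Fact.out Nat.card_pos.ne'

theorem Sylow.card_conj_smul_map_subtype {A : Subgroup G} (P : Sylow p A) (a : G) :
    Nat.card ↥(MulAut.conj a • (P : Subgroup A).map A.subtype) = ordProj[p] (Nat.card A) := by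
  rw [← Nat.card_congr (Subgroup.equivSMul _ _).toEquiv,
    Subgroup.card_map_of_injective A.subtype_injective, P.card_eq_multiplicity]

theorem Sylow.exists_conj_smul_le_of_coe_mul_eq_univ {A B : Subgroup G}
    (hBA : (B : Set G) * (A : Set G) = Set.univ) {P Q : Subgroup G}
    (hP : IsPGroup p P) (hQ : IsPGroup p Q) :
    ∃ a : A, ∃ b : B, ∃ S : Sylow p G,
      MulAut.conj (a : G) • P ≤ S ∧ MulAut.conj (b : G) • Q ≤ S := by
  obtain ⟨S₁, hS₁⟩ := hP.exists_le_sylow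
  obtain ⟨S₂, hS₂⟩ := hQ.exists_le_sylow
  obtain ⟨g, rfl⟩ := MulAction.exists_smul_eq G S₁ S₂
  obtain ⟨b, hb, a, ha, hba⟩ : g ∈ (B : Set G) * (A : Set G) := by rw [hBA]; trivial
  have hS : a • S₁ = b⁻¹ • g • S₁ := by rw [← mul_smul, ← hba, inv_mul_cancel_left]
  refine ⟨⟨a, ha⟩, ⟨b⁻¹, inv_mem hb⟩, a • S₁, ?_, ?_⟩
  · rw [Sylow.coe_subgroup_smul]
    exact Subgroup.pointwise_smul_le_pointwise_smul_iff.mpr hS₁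
  · rw [hS, Sylow.coe_subgroup_smul]
    exact Subgroup.pointwise_smul_le_pointwise_smul_iff.mpr hS₂

theorem Sylow.coe_eq_mul_of_coe_mul_eq_univ {A B : Subgroup G}
    (hAB : (A : Set G) * (B : Set G) = Set.univ) (S : Sylow p G) {P Q : Subgroup G}
    (hPA : P ≤ A) (hQB : Q ≤ B) (hPS : P ≤ S) (hQS : Q ≤ S)
    (hP : Nat.card P = ordProj[p] (Nat.card A)) (hQ : Nat.card Q = ordProj[p] (Nat.card B)) :
    (S : Set G) = (P : Set G) * (Q : Set G) := by
  have hsub : (P : Set G) * (Q : Set G) ⊆ S :=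
    (Set.mul_subset_mul (SetLike.coe_subset_coe.mpr hPS) (SetLike.coe_subset_coe.mpr hQS)).trans
      (coe_mul_coe (S : Subgroup G)).subset
  have hG := Subgroup.card_coe_mul_mul_card_inf A B
  rw [hAB, Nat.card_univ] at hG
  have hpart :
      ordProj[p] (Nat.card G) * ordProj[p] (Nat.card ↥(A ⊓ B)) = Nat.card P * Nat.card Q := by
    rw [hP, hQ, ← Nat.ordProj_mul _ Nat.card_pos.ne' Nat.card_pos.ne',
      ← Nat.ordProj_mul _ Nat.card_pos.ne' Nat.card_pos.ne', hG]
  have hPQ : Nat.card ↥(P ⊓ Q) ≤ ordProj[p] (Nat.card ↥(A ⊓ B)) :=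
    Nat.le_of_dvd (Nat.ordProj_pos _ p)
      ((S.isPGroup'.to_le (inf_le_left.trans hPS)).card_dvd_ordProj_of_le (inf_le_inf hPA hQB))
  have hcard : Nat.card S ≤ Nat.card ↥((P : Set G) * (Q : Set G)) := by
    rw [S.card_eq_multiplicity]
    refine Nat.le_of_mul_le_mul_right ?_ (Nat.ordProj_pos (Nat.card ↥(A ⊓ B)) p)
    calc ordProj[p] (Nat.card G) * ordProj[p] (Nat.card ↥(A ⊓ B))
        = Nat.card ↥((P : Set G) * (Q : Set G)) * Nat.card ↥(P ⊓ Q) := by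
          rw [hpart, Subgroup.card_coe_mul_mul_card_inf]
      _ ≤ Nat.card ↥((P : Set G) * (Q : Set G)) * ordProj[p] (Nat.card ↥(A ⊓ B)) :=
          Nat.mul_le_mul_left _ hPQ
  rw [← SetLike.coe_sort_coe, Nat.card_coe_set_eq, Nat.card_coe_set_eq] at hcard
  exact (Set.eq_of_subset_of_ncard_le hsub hcard (Set.toFinite _)).symm

end Sylow

end

theorem factorized_sylow_and_conjugate_general
    (G : Type*) [Group G] [Finite G] (A B : Subgroup G)
    (hA : A ≠ ⊤)
    (hAB : (A : Set G) * (B : Set G) = Set.univ) :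
    (∀ p : ℕ, p.Prime →
      ∃ Gp Ap Bp : Subgroup G,
        (IsPGroup p Gp ∧ ¬ p ∣ Gp.index) ∧
        (Ap ≤ A ∧ IsPGroup p Ap ∧ ¬ p ∣ Ap.relIndex A) ∧
        (Bp ≤ B ∧ IsPGroup p Bp ∧ ¬ p ∣ Bp.relIndex B) ∧
        (Gp : Set G) = (Ap : Set G) * (Bp : Set G)) ∧
    (∀ x : G,
      ((Subgroup.map (MulAut.conj x).toMonoidHom A : Subgroup G) : Set G) * (B : Set G)
        = Set.univ ∧
      (A : Set G) * ((Subgroup.map (MulAut.conj x).toMonoidHom A : Subgroup G) : Set G)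
        ≠ Set.univ) := by
  refine ⟨fun p hp => ?_, fun x =>
    ⟨Subgroup.conj_smul_coe_mul_eq_univ hAB x, Subgroup.coe_mul_conj_smul_ne_univ hA x⟩⟩
  have : Fact p.Prime := ⟨hp⟩
  obtain ⟨PA⟩ : Nonempty (Sylow p A) := inferInstance
  obtain ⟨PB⟩ : Nonempty (Sylow p B) := inferInstance
  obtain ⟨a, b, S, hPS, hQS⟩ := Sylow.exists_conj_smul_le_of_coe_mul_eq_univ
    (Subgroup.coe_mul_coe_eq_univ_comm hAB) (PA.isPGroup'.map A.subtype)
    (PB.isPGroup'.map B.subtype)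
  have hPA := Subgroup.conj_smul_le_of_le (Subgroup.map_subtype_le (PA : Subgroup A)) a
  have hQB := Subgroup.conj_smul_le_of_le (Subgroup.map_subtype_le (PB : Subgroup B)) b
  have hP := PA.card_conj_smul_map_subtype a
  have hQ := PB.card_conj_smul_map_subtype b
  exact ⟨S, _, _, ⟨S.isPGroup', S.not_dvd_index⟩,
    ⟨hPA, .of_card hP, Subgroup.not_dvd_relIndex_of_card_eq_ordProj hPA hP⟩,
    ⟨hQB, .of_card hQ, Subgroup.not_dvd_relIndex_of_card_eq_ordProj hQB hQ⟩,
    S.coe_eq_mul_of_coe_mul_eq_univ hAB hPA hQB hPS hQS hP hQ⟩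

/-- If `G = AB` with `A, B` proper: (1) for every prime `p` there are Sylow
`p`-subgroups `G_p = A_p B_p`; (2) `G = A^x B` and `G ≠ A A^x` for every `x`. -/
theorem factorized_sylow_and_conjugate
    (G : Type*) [Group G] [Finite G] (A B : Subgroup G)
    (hA : A ≠ ⊤) (hB : B ≠ ⊤)
    (hAB : (A : Set G) * (B : Set G) = Set.univ) :
    (∀ p : ℕ, p.Prime →
      ∃ Gp Ap Bp : Subgroup G,
        (IsPGroup p Gp ∧ ¬ p ∣ Gp.index) ∧
        (Ap ≤ A ∧ IsPGroup p Ap ∧ ¬ p ∣ Ap.relIndex A) ∧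
        (Bp ≤ B ∧ IsPGroup p Bp ∧ ¬ p ∣ Bp.relIndex B) ∧
        (Gp : Set G) = (Ap : Set G) * (Bp : Set G)) ∧
    (∀ x : G,
      ((Subgroup.map (MulAut.conj x).toMonoidHom A : Subgroup G) : Set G) * (B : Set G)
        = Set.univ ∧
      (A : Set G) * ((Subgroup.map (MulAut.conj x).toMonoidHom A : Subgroup G) : Set G)
        ≠ Set.univ) :=
  factorized_sylow_and_conjugate_general G A B hA hAB
end

section
/- If a finite group G satisfies D_π for a set of primes π and N is a normal subgroup of G, then the quotient G/N satisfies D_π. -/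
/-! Images of Hall π-subgroups under a surjection are Hall π-subgroups. Conversely, every π-subgroup
`K` of `G/N` is the image of a π-subgroup of `G`: among the subgroups mapping onto `K`, one of least
order has a kernel without proper supplements, and the prime divisors of such a kernel divide `|K|`.
Existence, conjugacy and the covering property of Hall π-subgroups then pass from `G` to `G/N`. -/

open Pointwise

/-- Frattini's argument makes a Sylow `p`-subgroup of `L` normal in `X`; if `p ∤ |X : L|`, a
Schur–Zassenhaus complement of it would be a proper supplement of `L`. -/
theorem Subgroup.dvd_index_of_dvd_card_of_forall_sup_eq_top {X : Type*} [Group X] [Finite X]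
    {L : Subgroup X} [L.Normal] (hL : ∀ A : Subgroup X, A ⊔ L = ⊤ → A = ⊤) {p : ℕ}
    [hp : Fact p.Prime] (hpL : p ∣ Nat.card L) : p ∣ L.index := by
  by_contra hpX
  obtain P : Sylow p L := default
  set Q := (P : Subgroup L).map L.subtype
  have hQ_normal : Q.Normal := Subgroup.normalizer_eq_top_iff.mp (hL _ P.normalizer_sup_eq_top)
  have hQ_coprime : (Nat.card Q).Coprime Q.index := by
    rw [Subgroup.card_map_of_injective L.subtype_injective, Subgroup.index_map_subtype]
    obtain ⟨n, hn⟩ := IsPGroup.iff_card.mp P.2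
    refine P.card_coprime_index.mul_right ?_
    rw [hn]
    exact Nat.Coprime.pow_left _ ((Nat.Prime.coprime_iff_not_dvd hp.out).mpr hpX)
  obtain ⟨C, hC⟩ := Subgroup.exists_right_complement'_of_coprime hQ_coprime
  have hC_top : C = ⊤ := by
    refine hL C (top_le_iff.mp ?_)
    rw [← hC.sup_eq_top, sup_comm]
    exact sup_le_sup_left (Subgroup.map_subtype_le _) C
  rw [hC_top, Subgroup.isComplement'_top_right,
    Subgroup.map_eq_bot_iff_of_injective _ L.subtype_injective] at hC
  exact P.ne_bot_of_dvd_card hpL hC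

theorem MonoidHom.map_map_subtype_eq_of_sup_ker_eq_top {G H : Type*} [Group G] [Group H]
    (f : G →* H) {X : Subgroup G} {A : Subgroup X} (hA : A ⊔ (f.comp X.subtype).ker = ⊤) :
    (A.map X.subtype).map f = X.map f := by
  have hker : (f.comp X.subtype).ker.map (f.comp X.subtype) = ⊥ :=
    (Subgroup.map_eq_bot_iff _).mpr le_rfl
  have hrange : X.map f = (f.comp X.subtype).range := by
    rw [MonoidHom.range_comp, Subgroup.range_subtype]
  rw [Subgroup.map_map, hrange, MonoidHom.range_eq_map, ← hA, Subgroup.map_sup, hker, sup_bot_eq]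

theorem exists_isPiSubgroup_map_eq {π : Set ℕ} {G H : Type*} [Group G] [Group H] [Finite G]
    (f : G →* H) {K : Subgroup H} (hKf : K ≤ f.range) (hK : IsPiSubgroup π K) :
    ∃ X : Subgroup G, IsPiSubgroup π X ∧ X.map f = K := by
  have : Nonempty {X : Subgroup G // X.map f = K} :=
    ⟨⟨K.comap f, by rw [Subgroup.map_comap_eq, inf_of_le_right hKf]⟩⟩
  obtain ⟨⟨X, rfl⟩, hmin⟩ := Finite.exists_min (fun X : {X : Subgroup G // X.map f = K} ↦
    Nat.card X.1)
  refine ⟨X, fun p hp hpX ↦ hK p hp ?_, rfl⟩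
  have : Fact p.Prime := ⟨hp⟩
  set L := (f.comp X.subtype).ker
  have hL : ∀ A : Subgroup X, A ⊔ L = ⊤ → A = ⊤ := fun A hA ↦ by
    have := hmin ⟨A.map X.subtype, f.map_map_subtype_eq_of_sup_ker_eq_top hA⟩
    rw [Subgroup.card_map_of_injective X.subtype_injective] at this
    exact Subgroup.eq_top_of_le_card A this
  have hL_index : L.index = Nat.card (X.map f) := by
    rw [Subgroup.index_ker, MonoidHom.range_comp, Subgroup.range_subtype]
  rw [← hL_index]
  rw [← L.card_mul_index] at hpX
  rcases (Nat.Prime.dvd_mul hp).mp hpX with hpL | hpL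
  · exact Subgroup.dvd_index_of_dvd_card_of_forall_sup_eq_top hL hpL
  · exact hpL

theorem IsHall.map {π : Set ℕ} {G H : Type*} [Group G] [Group H] {f : G →* H}
    (hf : Function.Surjective f) {A : Subgroup G} (hA : IsHall π A) : IsHall π (A.map f) :=
  ⟨fun p hp hpA ↦ hA.1 p hp (hpA.trans (Subgroup.card_map_dvd A f)),
    fun p hp hpA ↦ hA.2 p hp (hpA.trans (A.index_map_dvd hf))⟩

theorem IsHall.eq_of_le {π : Set ℕ} {G : Type*} [Group G] {A B : Subgroup G}
    (hA : IsHall π A) (hB : IsHall π B) (hAB : A ≤ B) : A = B := by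
  refine le_antisymm hAB (Subgroup.relIndex_eq_one.mp ?_)
  by_contra hne
  obtain ⟨p, hp, hpd⟩ := Nat.exists_prime_and_dvd hne
  exact hA.2 p hp (hpd.trans (Subgroup.relIndex_dvd_index_of_le hAB))
    (hB.1 p hp (hpd.trans (A.relIndex_dvd_card B)))

theorem Subgroup.map_map_conj {G H : Type*} [Group G] [Group H] (f : G →* H) (g : G)
    (A : Subgroup G) :
    (A.map (MulAut.conj g).toMonoidHom).map f = (A.map f).map (MulAut.conj (f g)).toMonoidHom := by
  rw [Subgroup.map_map, Subgroup.map_map]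
  congr 1
  ext
  simp

theorem SatisfiesD.of_surjective {π : Set ℕ} {G H : Type*} [Group G] [Group H] [Finite G]
    (hD : SatisfiesD π G) {f : G →* H} (hf : Function.Surjective f) : SatisfiesD π H := by
  obtain ⟨⟨A₀, hA₀⟩, hconj, hcover⟩ := hD
  have lift_pi (S : Subgroup H) (hS : IsPiSubgroup π S) :
      ∃ A : Subgroup G, IsHall π A ∧ S ≤ A.map f := by
    obtain ⟨X, hX, rfl⟩ := exists_isPiSubgroup_map_eq f (by simp [f.range_eq_top.mpr hf]) hS
    obtain ⟨A, hA, hXA⟩ := hcover X hX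
    exact ⟨A, hA, Subgroup.map_mono hXA⟩
  have lift_hall (B : Subgroup H) (hB : IsHall π B) : ∃ A : Subgroup G, IsHall π A ∧ A.map f = B := by
    obtain ⟨A, hA, hBA⟩ := lift_pi B hB.1
    exact ⟨A, hA, (hB.eq_of_le (hA.map hf) hBA).symm⟩
  refine ⟨⟨A₀.map f, hA₀.map hf⟩, fun B₁ B₂ hB₁ hB₂ ↦ ?_, fun S hS ↦ ?_⟩
  · obtain ⟨A₁, hA₁, rfl⟩ := lift_hall B₁ hB₁
    obtain ⟨A₂, hA₂, rfl⟩ := lift_hall B₂ hB₂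
    obtain ⟨g, rfl⟩ := hconj A₁ A₂ hA₁ hA₂
    exact ⟨f g, A₁.map_map_conj f g⟩
  · obtain ⟨A, hA, hSA⟩ := lift_pi S hS
    exact ⟨A.map f, hA.map hf, hSA⟩

/-- If `G` satisfies `D_π` and `N ⊴ G`, then `G/N` satisfies `D_π`. -/
theorem satisfiesD_quotient
    (π : Set ℕ) (G : Type*) [Group G] [Finite G] (hD : SatisfiesD π G)
    (N : Subgroup G) [N.Normal] :
    SatisfiesD π (G ⧸ N) :=
  hD.of_surjective (QuotientGroup.mk'_surjective N)
end
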